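/- arXiv:1511.06468 — 2 statements merged into one kernel-verified Lean document; each statement's English description precedes it below -/
import Mathlib

section
/- Let ε ∈ (0, 1/2] and μ = ε/(4 log(nm/ε)), and suppose 1 ≤ opt ≤ n. Let δ ∈ [0, 1). Then for every x ∈ ℝⁿ with x ≥ 0 satisfying f_μ(x) ≤ −(1 − δ)·opt, the vector x/(1 + ε) is feasible for the packing LP (i.e., A(x/(1+ε)) ≤ 1 and x/(1+ε) ≥ 0) and satisfies 1ᵀ(x/(1+ε)) ≥ ((1 − δ)/(1 + ε))·opt. -/
/-- The smoothed packing objective `f_μ(x) = −∑ᵢ xᵢ + μ ∑ⱼ exp((1/μ)((Ax)ⱼ − 1))`. -/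
noncomputable def fmu {m n : ℕ} (A : Matrix (Fin m) (Fin n) ℝ) (μ : ℝ) (x : Fin n → ℝ) : ℝ :=
  -(∑ i, x i) + μ * ∑ j, Real.exp ((1 / μ) * (A.mulVec x j - 1))

/-!
The penalty term of `f_μ` is nonnegative, so `f_μ(x) ≤ −(1 − δ)·opt` already gives
`1ᵀx ≥ (1 − δ)·opt`. If some row had `(Ax)ⱼ = t > 1 + ε` with `t` maximal, then `x/t` would be
feasible, so `1ᵀx ≤ t·opt ≤ t·n`; but the penalty of that row alone is `μ·e^{(t−1)/μ} ≥ t·n`,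
because `μ` is chosen so that `μ·e^{ε/μ} ≥ (1 + ε)·n`. Then `f_μ(x) ≥ 0`, a contradiction.
-/

open Real Finset Matrix

noncomputable def smoothingParam (n m ε : ℝ) : ℝ := ε / (4 * log (n * m / ε))

section SmoothingParam

variable {n m ε : ℝ}

lemma two_le_mul_div (hn : 1 ≤ n) (hm : 1 ≤ m) (hε0 : 0 < ε) (hε : ε ≤ 1 / 2) :
    2 ≤ n * m / ε := by
  rw [le_div_iff₀ hε0]
  nlinarith

lemma smoothingParam_pos (hn : 1 ≤ n) (hm : 1 ≤ m) (hε0 : 0 < ε) (hε : ε ≤ 1 / 2) :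
    0 < smoothingParam n m ε := by
  have := log_pos (by linarith [two_le_mul_div hn hm hε0 hε] : 1 < n * m / ε)
  unfold smoothingParam
  positivity

lemma smoothingParam_le_one (hn : 1 ≤ n) (hm : 1 ≤ m) (hε0 : 0 < ε) (hε : ε ≤ 1 / 2) :
    smoothingParam n m ε ≤ 1 := by
  have hlog : log 2 ≤ log (n * m / ε) :=
    log_le_log (by norm_num) (two_le_mul_div hn hm hε0 hε)
  rw [smoothingParam, div_le_one (by linarith [log_two_gt_d9])]
  linarith [log_two_gt_d9]

lemma one_add_mul_le_smoothingParam_mul_exp (hn : 1 ≤ n) (hm : 1 ≤ m) (hε0 : 0 < ε)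
    (hε : ε ≤ 1 / 2) :
    (1 + ε) * n ≤ smoothingParam n m ε * exp (ε / smoothingParam n m ε) := by
  set z := n * m / ε with hz
  have hz2 : 2 ≤ z := two_le_mul_div hn hm hε0 hε
  have hL : 0 < log z := log_pos (by linarith)
  have hexp : exp (ε / smoothingParam n m ε) = z ^ 4 := by
    rw [smoothingParam, ← hz, div_div_cancel₀ hε0.ne',
      show 4 * log z = ((4 : ℕ) : ℝ) * log z by norm_num, exp_nat_mul, exp_log (by linarith)]
  have hlog : log z ≤ z - 1 := log_le_sub_one_of_pos (by linarith)
  -- `z³ − 6z + 6 = (z − 2)(z² + 2z − 2) + 2`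
  have hcubic : 6 * (z - 1) ≤ m * z ^ 3 := by
    nlinarith [mul_nonneg (sub_nonneg.2 hz2) (by nlinarith : (0 : ℝ) ≤ z ^ 2 + 2 * z - 2),
      mul_nonneg (sub_nonneg.2 hm) (by positivity : (0 : ℝ) ≤ z ^ 3)]
  have hεz : ε * z = n * m := by rw [hz]; field_simp
  rw [hexp, smoothingParam, ← hz, div_mul_eq_mul_div, le_div_iff₀ (by positivity)]
  calc (1 + ε) * n * (4 * log z) = n * (4 * (1 + ε) * log z) := by ring
    _ ≤ n * (6 * (z - 1)) := by
      gcongr n * ?_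
      exact mul_le_mul (by linarith) hlog hL.le (by norm_num)
    _ ≤ n * (m * z ^ 3) := by gcongr
    _ = ε * z ^ 4 := by linear_combination -(z ^ 3) * hεz

end SmoothingParam

lemma mul_le_mul_exp_of_one_add_le {μ ε K t : ℝ} (hμ0 : 0 < μ) (hμ1 : μ ≤ 1) (hε : 0 ≤ ε)
    (hK : 0 ≤ K) (hKμ : (1 + ε) * K ≤ μ * exp (ε / μ)) (ht : 1 + ε ≤ t) :
    t * K ≤ μ * exp ((1 / μ) * (t - 1)) := by
  set s := t - 1 - ε
  have hs : 0 ≤ s := by linarith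
  calc t * K ≤ (1 + ε) * K * (1 + s) := by nlinarith [mul_nonneg (mul_nonneg hε hs) hK]
    _ ≤ (1 + ε) * K * (1 + s / μ) := by gcongr; exact le_div_self hs hμ0 hμ1
    _ ≤ μ * exp (ε / μ) * exp (s / μ) := by
      gcongr
      linarith [add_one_le_exp (s / μ)]
    _ = μ * exp ((1 / μ) * (t - 1)) := by
      rw [mul_assoc, ← exp_add]
      congr 2
      field_simp
      ring

section Packing

variable {ι κ : Type*} [Fintype ι]

def packingValues (A : Matrix κ ι ℝ) : Set ℝ :=
  {v | ∃ x : ι → ℝ, (∀ i, 0 ≤ x i) ∧ (∀ j, A.mulVec x j ≤ 1) ∧ v = ∑ i, x i}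

lemma mulVec_div_const (A : Matrix κ ι ℝ) (x : ι → ℝ) (c : ℝ) :
    A *ᵥ (fun i => x i / c) = fun j => (A *ᵥ x) j / c := by
  ext j
  simp [mulVec, dotProduct, sum_div, mul_div_assoc]

lemma sum_le_mul_of_mulVec_le {A : Matrix κ ι ℝ} {opt t : ℝ}
    (hopt : opt ∈ upperBounds (packingValues A)) {x : ι → ℝ} (hx : ∀ i, 0 ≤ x i)
    (ht : 0 < t) (hAx : ∀ j, (A *ᵥ x) j ≤ t) :
    ∑ i, x i ≤ t * opt := by
  have hscaled : ∑ i, x i / t ≤ opt := hopt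
    ⟨fun i => x i / t, fun i => div_nonneg (hx i) ht.le,
      fun j => by rw [mulVec_div_const]; exact (div_le_one ht).2 (hAx j), rfl⟩
  rwa [← sum_div, div_le_iff₀ ht, mul_comm] at hscaled

end Packing

section Fmu

variable {m n : ℕ} (A : Matrix (Fin m) (Fin n) ℝ) {μ : ℝ} (x : Fin n → ℝ)

lemma neg_sum_le_fmu (hμ : 0 ≤ μ) : -(∑ i, x i) ≤ fmu A μ x :=
  le_add_of_nonneg_right (mul_nonneg hμ (sum_nonneg fun _ _ => (exp_pos _).le))

lemma neg_sum_add_exp_le_fmu (hμ : 0 ≤ μ) (j : Fin m) :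
    -(∑ i, x i) + μ * exp ((1 / μ) * ((A *ᵥ x) j - 1)) ≤ fmu A μ x := by
  unfold fmu
  gcongr
  exact single_le_sum (f := fun j => exp ((1 / μ) * ((A *ᵥ x) j - 1)))
    (fun _ _ => (exp_pos _).le) (mem_univ j)

lemma mulVec_le_one_add_of_fmu_neg {opt ε : ℝ} (hopt : opt ∈ upperBounds (packingValues A))
    (hoptn : opt ≤ n) (hμ0 : 0 < μ) (hμ1 : μ ≤ 1) (hε : 0 ≤ ε)
    (hμε : (1 + ε) * n ≤ μ * exp (ε / μ)) (hx : ∀ i, 0 ≤ x i) (hf : fmu A μ x < 0)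
    (j : Fin m) : (A *ᵥ x) j ≤ 1 + ε := by
  by_contra! hj
  obtain ⟨j₀, -, hj₀⟩ := exists_max_image univ (fun j => (A *ᵥ x) j) ⟨j, mem_univ j⟩
  set t := (A *ᵥ x) j₀
  have ht : 1 + ε < t := hj.trans_le (hj₀ j (mem_univ j))
  have hsum : ∑ i, x i ≤ t * n := by
    calc ∑ i, x i ≤ t * opt :=
          sum_le_mul_of_mulVec_le hopt hx (by linarith) fun j => hj₀ j (mem_univ j)
      _ ≤ t * n := by gcongr; linarith
  have hpenalty : t * n ≤ μ * exp ((1 / μ) * (t - 1)) :=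
    mul_le_mul_exp_of_one_add_le hμ0 hμ1 hε n.cast_nonneg hμε ht.le
  linarith [neg_sum_add_exp_le_fmu A x hμ0.le j₀]

end Fmu

theorem fmu_small_gives_approx_solution_general (m n : ℕ) (hm : 0 < m)
    (A : Matrix (Fin m) (Fin n) ℝ)
    (ε : ℝ) (hε : ε ∈ Set.Ioc (0 : ℝ) (1 / 2))
    (μ : ℝ) (hμ : μ = ε / (4 * Real.log ((n : ℝ) * m / ε)))
    (opt : ℝ)
    (hopt : IsLUB {v : ℝ | ∃ x : Fin n → ℝ,
        (∀ i, 0 ≤ x i) ∧ (∀ j, A.mulVec x j ≤ 1) ∧ v = ∑ i, x i} opt)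
    (hopt1 : 1 ≤ opt) (hoptn : opt ≤ (n : ℝ))
    (δ : ℝ) (hδ : δ ∈ Set.Ico (0 : ℝ) 1) :
    ∀ x : Fin n → ℝ, (∀ i, 0 ≤ x i) → fmu A μ x ≤ -(1 - δ) * opt →
      (∀ i, 0 ≤ x i / (1 + ε)) ∧ (∀ j, A.mulVec (fun i => x i / (1 + ε)) j ≤ 1) ∧
        ((1 - δ) / (1 + ε)) * opt ≤ ∑ i, x i / (1 + ε) := by
  intro x hx hf
  obtain ⟨hε0, hε⟩ := hε
  have hn : (1 : ℝ) ≤ n := hopt1.trans hoptn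
  have hm : (1 : ℝ) ≤ m := by exact_mod_cast hm
  change μ = smoothingParam n m ε at hμ
  subst hμ
  have hμ0 := smoothingParam_pos hn hm hε0 hε
  have hfneg : fmu A (smoothingParam n m ε) x < 0 := hf.trans_lt (by nlinarith [hδ.2])
  have hsum : (1 - δ) * opt ≤ ∑ i, x i := by linarith [neg_sum_le_fmu A x hμ0.le]
  have hfeas := mulVec_le_one_add_of_fmu_neg A x hopt.1 hoptn hμ0
    (smoothingParam_le_one hn hm hε0 hε) hε0.le
    (one_add_mul_le_smoothingParam_mul_exp hn hm hε0 hε) hx hfneg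
  have hε1 : 0 < 1 + ε := by linarith
  refine ⟨fun i => div_nonneg (hx i) hε1.le, fun j => ?_, ?_⟩
  · rw [mulVec_div_const]
    exact (div_le_one hε1).2 (hfeas j)
  · rw [← sum_div, div_mul_eq_mul_div]
    gcongr

/-- With `ε ∈ (0,1/2]`, `μ = ε/(4 log(nm/ε))`, `1 ≤ opt ≤ n`, and `δ ∈ [0,1)`,
every `x ≥ 0` with `f_μ(x) ≤ −(1 − δ)·opt` gives a feasible point `x/(1+ε)` of the packing LP
with objective value at least `((1 − δ)/(1 + ε))·opt`. -/
theorem fmu_small_gives_approx_solution (m n : ℕ) (hm : 0 < m) (hn : 0 < n)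
    (A : Matrix (Fin m) (Fin n) ℝ) (hA : ∀ j i, 0 ≤ A j i)
    (ε : ℝ) (hε : ε ∈ Set.Ioc (0 : ℝ) (1 / 2))
    (μ : ℝ) (hμ : μ = ε / (4 * Real.log ((n : ℝ) * m / ε)))
    (opt : ℝ)
    (hopt : IsLUB {v : ℝ | ∃ x : Fin n → ℝ,
        (∀ i, 0 ≤ x i) ∧ (∀ j, A.mulVec x j ≤ 1) ∧ v = ∑ i, x i} opt)
    (hopt1 : 1 ≤ opt) (hoptn : opt ≤ (n : ℝ))
    (δ : ℝ) (hδ : δ ∈ Set.Ico (0 : ℝ) 1) :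
    ∀ x : Fin n → ℝ, (∀ i, 0 ≤ x i) → fmu A μ x ≤ -(1 - δ) * opt →
      (∀ i, 0 ≤ x i / (1 + ε)) ∧ (∀ j, A.mulVec (fun i => x i / (1 + ε)) j ≤ 1) ∧
        ((1 - δ) / (1 + ε)) * opt ≤ ∑ i, x i / (1 + ε) :=
  fmu_small_gives_approx_solution_general m n hm A ε hε μ hμ opt hopt hopt1 hoptn δ hδ
end

section
/- Assume the setup of the bucketed truncated-gradient update with ε ∈ (0, 1/2], μ = ε/(4 log(nm/ε)), and α = μ/20. Let x ∈ ℝⁿ with x ≥ 0 and Ax ≤ (1 + ε)·1. Then for every t ∈ {0, …, w−1} and every u ∈ ℝⁿ with u ≥ 0: ⟨α·η^{(t)}, x − u⟩ ≤ 4·(f_μ(x) − f_μ(x′^{(t)})). -/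
/-- The gradient of `f_μ`: `∇ᵢ f_μ(x) = −1 + ∑ⱼ A_{ji} exp((1/μ)((Ax)ⱼ − 1))`. -/
noncomputable def gradFmu {m n : ℕ} (A : Matrix (Fin m) (Fin n) ℝ) (μ : ℝ) (x : Fin n → ℝ)
    (i : Fin n) : ℝ :=
  -1 + ∑ j, A j i * Real.exp ((1 / μ) * (A.mulVec x j - 1))

/-- Truncated gradient `ξ`: zero on `[−ε, ε]`, capped at `1` above `1`, equal to `g` in between. -/
noncomputable def xiTrunc {n : ℕ} (ε : ℝ) (g : Fin n → ℝ) (i : Fin n) : ℝ :=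
  if g i ∈ Set.Icc (-ε) ε then 0 else if 1 < g i then 1 else g i

/-- The large component `η`: `ηᵢ = gᵢ − 1` when `gᵢ > 1`, and `0` otherwise. -/
noncomputable def etaTrunc {n : ℕ} (g : Fin n → ℝ) (i : Fin n) : ℝ :=
  if 1 < g i then g i - 1 else 0

/-- Bucketed truncated gradient `ξ^{(t)}`: keeps `ξᵢ` when `ξᵢ ∈ (ε2ᵗ, ε2^{t+1}] ∪ [−ε2^{t+1}, −ε2ᵗ)`. -/
noncomputable def xiBucket {n : ℕ} (ε : ℝ) (ξ : Fin n → ℝ) (t : ℕ) (i : Fin n) : ℝ :=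
  if ξ i ∈ Set.Ioc (ε * 2 ^ t) (ε * 2 ^ (t + 1)) ∪ Set.Ico (-(ε * 2 ^ (t + 1))) (-(ε * 2 ^ t))
    then ξ i else 0

/-- Bucketed large component `η^{(t)}`: equals `η` when `t = w − 1`, and `0` otherwise. -/
noncomputable def etaBucket {n : ℕ} (w : ℕ) (η : Fin n → ℝ) (t : ℕ) : Fin n → ℝ :=
  if t = w - 1 then η else 0

/-- The update step: `x′^{(t)}ᵢ = xᵢ · exp(−α ξ^{(t)}ᵢ)`. -/
noncomputable def updStep {n : ℕ} (α : ℝ) (x ξt : Fin n → ℝ) (i : Fin n) : ℝ :=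
  x i * Real.exp (-(α * ξt i))

/-- The number of buckets `w = ⌈log₂(1/ε)⌉`. -/
noncomputable def wBuckets (ε : ℝ) : ℕ := ⌈Real.logb 2 (1 / ε)⌉₊

/-!
Write the step as `x' = x + d` with `dᵢ = xᵢ (exp(-α ξᵢ) - 1)`, so `|dᵢ| ≤ 2α xᵢ |ξᵢ|`. Since
`Ax ≤ 1 + ε`, this gives `|(Ad)ⱼ| ≤ μ`, and `exp s ≤ 1 + s + s²` on `[-1, 1]` yields
`f_μ(x') - f_μ(x) ≤ ⟨∇f_μ(x), d⟩ + μ⁻¹ ∑ⱼ pⱼ (Ad)ⱼ²`. With `S = ∑ᵢ xᵢ ξᵢ ∇ᵢf_μ(x) ≥ 0`, the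
linear term is at most `-α(1 - α) S`, and by Cauchy–Schwarz, `∑ⱼ pⱼ Aⱼᵢ = 1 + ∇ᵢf_μ(x)` and
`ξᵢ² (1 + ∇ᵢf_μ) ≤ 2 ξᵢ ∇ᵢf_μ`, the quadratic term is at most `8α²(1 + ε)/μ · S`. For
`μ = 20α` the step therefore decreases `f_μ` by at least `α S / 4`. On the other side, `η` is
nonzero only in the last bucket and only at coordinates where `ξᵢ = 1`, so
`⟨η, x - u⟩ ≤ ⟨η, x⟩ ≤ S`.
-/

open Finset Matrix

noncomputable def packingWeight {m n : ℕ} (A : Matrix (Fin m) (Fin n) ℝ) (μ : ℝ)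
    (x : Fin n → ℝ) (j : Fin m) : ℝ :=
  Real.exp ((1 / μ) * ((A *ᵥ x) j - 1))

section Objective

variable {m n : ℕ} (A : Matrix (Fin m) (Fin n) ℝ) {μ : ℝ}

lemma fmu_eq (x : Fin n → ℝ) : fmu A μ x = -(∑ i, x i) + μ * ∑ j, packingWeight A μ x j := rfl

lemma gradFmu_eq (x : Fin n → ℝ) (i : Fin n) :
    gradFmu A μ x i = -1 + ∑ j, A j i * packingWeight A μ x j := rfl

lemma neg_one_le_gradFmu (hA : ∀ j i, 0 ≤ A j i) (x : Fin n → ℝ) (i : Fin n) :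
    -1 ≤ gradFmu A μ x i := by
  have : 0 ≤ ∑ j, A j i * packingWeight A μ x j :=
    sum_nonneg fun j _ => mul_nonneg (hA j i) (Real.exp_pos _).le
  rw [gradFmu_eq]
  linarith

lemma packingWeight_dotProduct_mulVec (x y : Fin n → ℝ) :
    packingWeight A μ x ⬝ᵥ (A *ᵥ y) = ∑ i, (1 + gradFmu A μ x i) * y i := by
  rw [dotProduct_mulVec]
  simp only [dotProduct, vecMul, gradFmu_eq, add_neg_cancel_left, mul_comm (packingWeight A μ x _)]

lemma packingWeight_add (x d : Fin n → ℝ) (j : Fin m) :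
    packingWeight A μ (x + d) j = packingWeight A μ x j * Real.exp ((1 / μ) * (A *ᵥ d) j) := by
  simp only [packingWeight, mulVec_add, Pi.add_apply, ← Real.exp_add]
  ring_nf

lemma fmu_add_sub_le (hμ : 0 < μ) (x d : Fin n → ℝ) (hd : ∀ j, |(A *ᵥ d) j| ≤ μ) :
    fmu A μ (x + d) - fmu A μ x
      ≤ ∑ i, gradFmu A μ x i * d i + 1 / μ * ∑ j, packingWeight A μ x j * (A *ᵥ d) j ^ 2 := by
  have hexp : ∀ j, Real.exp ((1 / μ) * (A *ᵥ d) j) - 1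
      ≤ (1 / μ) * (A *ᵥ d) j + ((1 / μ) * (A *ᵥ d) j) ^ 2 := by
    intro j
    have hs : |(1 / μ) * (A *ᵥ d) j| ≤ 1 := by
      rw [abs_mul, abs_of_pos (one_div_pos.mpr hμ), one_div, inv_mul_le_iff₀ hμ, mul_one]
      exact hd j
    linarith [(abs_le.mp (Real.abs_exp_sub_one_sub_id_le hs)).2]
  have hsum : μ * ∑ j, packingWeight A μ x j * (Real.exp ((1 / μ) * (A *ᵥ d) j) - 1)
      ≤ packingWeight A μ x ⬝ᵥ (A *ᵥ d)
        + 1 / μ * ∑ j, packingWeight A μ x j * (A *ᵥ d) j ^ 2 := by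
    calc μ * ∑ j, packingWeight A μ x j * (Real.exp ((1 / μ) * (A *ᵥ d) j) - 1)
        ≤ μ * ∑ j, packingWeight A μ x j
            * ((1 / μ) * (A *ᵥ d) j + ((1 / μ) * (A *ᵥ d) j) ^ 2) := by
          gcongr with j
          · exact (Real.exp_pos _).le
          · exact hexp j
      _ = _ := by
          simp only [dotProduct, mul_sum, ← sum_add_distrib]
          refine sum_congr rfl fun j _ => ?_
          field_simp
  have hfmu : fmu A μ (x + d) - fmu A μ x = -∑ i, d i
      + μ * ∑ j, packingWeight A μ x j * (Real.exp ((1 / μ) * (A *ᵥ d) j) - 1) := by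
    simp only [fmu_eq, packingWeight_add, Pi.add_apply, sum_add_distrib, mul_sub, mul_one,
      sum_sub_distrib]
    ring
  rw [packingWeight_dotProduct_mulVec] at hsum
  have hlin : -∑ i, d i + ∑ i, (1 + gradFmu A μ x i) * d i = ∑ i, gradFmu A μ x i * d i := by
    simp only [add_mul, one_mul, sum_add_distrib]
    ring
  linarith

end Objective

lemma exp_neg_mul_sub_one_mul_le {a ξ g : ℝ} (ha0 : 0 ≤ a) (ha1 : a ≤ 1) (hξ : |ξ| ≤ 1)
    (hξg : ξ ^ 2 ≤ ξ * g) :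
    (Real.exp (-(a * ξ)) - 1) * g ≤ -(a * (1 - a)) * (ξ * g) := by
  have hs : |-(a * ξ)| ≤ 1 := by
    rw [abs_neg, abs_mul, abs_of_nonneg ha0]
    nlinarith [abs_nonneg ξ]
  have hlow := Real.add_one_le_exp (-(a * ξ))
  have hup := (abs_le.mp (Real.abs_exp_sub_one_sub_id_le hs)).2
  have hξ' := abs_le.mp hξ
  rcases le_or_gt 0 g with hg | hg
  · have hξ0 : 0 ≤ ξ := by nlinarith [sq_nonneg ξ]
    nlinarith [mul_nonneg (mul_nonneg (sq_nonneg a) hξ0) (mul_nonneg hg (sub_nonneg.mpr hξ'.2)),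
      mul_le_mul_of_nonneg_right hup hg]
  · nlinarith [mul_nonneg (sq_nonneg a) (hξg.trans' (sq_nonneg ξ)),
      mul_le_mul_of_nonpos_right hlow hg.le]

lemma sq_mul_one_add_le_two_mul {ξ g : ℝ} (hξ : |ξ| ≤ 1) (hξg : ξ ^ 2 ≤ ξ * g) :
    ξ ^ 2 * (1 + g) ≤ 2 * (ξ * g) := by
  have hξg0 : 0 ≤ ξ * g := hξg.trans' (sq_nonneg ξ)
  have : ξ * (ξ * g) ≤ ξ * g := by
    nlinarith [le_abs_self ξ, mul_le_mul_of_nonneg_right hξ hξg0]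
  nlinarith

section Update

variable {n : ℕ} {α : ℝ} {x ξ : Fin n → ℝ}

lemma updStep_sub_apply (i : Fin n) :
    (updStep α x ξ - x) i = x i * (Real.exp (-(α * ξ i)) - 1) := by
  simp only [Pi.sub_apply, updStep]
  ring

lemma abs_updStep_sub_apply_le (hα : 0 ≤ α) (i : Fin n) (hx : 0 ≤ x i) (hξ : α * |ξ i| ≤ 1) :
    |(updStep α x ξ - x) i| ≤ 2 * α * (x i * |ξ i|) := by
  have hs : |-(α * ξ i)| ≤ 1 := by rwa [abs_neg, abs_mul, abs_of_nonneg hα]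
  have := Real.abs_exp_sub_one_le hs
  rw [abs_neg, abs_mul, abs_of_nonneg hα] at this
  rw [updStep_sub_apply, abs_mul, abs_of_nonneg hx]
  nlinarith

end Update

lemma sq_mulVec_le_of_abs_le {m n : ℕ} {A : Matrix (Fin m) (Fin n) ℝ} (hA : ∀ j i, 0 ≤ A j i)
    {x d ξ : Fin n → ℝ} (hx : ∀ i, 0 ≤ x i) {c : ℝ} (hd : ∀ i, |d i| ≤ c * (x i * |ξ i|))
    (j : Fin m) :
    (A *ᵥ d) j ^ 2 ≤ c ^ 2 * ((A *ᵥ x) j * (A *ᵥ fun i => x i * ξ i ^ 2) j) := by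
  have hsq : ∀ i, (A j i * d i) ^ 2 ≤ (A j i * x i) * (c ^ 2 * (A j i * (x i * ξ i ^ 2))) := by
    intro i
    have : d i ^ 2 ≤ (c * (x i * |ξ i|)) ^ 2 := by
      simpa only [sq_abs] using pow_le_pow_left₀ (abs_nonneg (d i)) (hd i) 2
    calc (A j i * d i) ^ 2 = A j i ^ 2 * d i ^ 2 := by ring
      _ ≤ A j i ^ 2 * (c * (x i * |ξ i|)) ^ 2 := by gcongr
      _ = _ := by rw [← sq_abs (ξ i)]; ring
  have := sum_sq_le_sum_mul_sum_of_sq_le_mul univ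
    (fun i _ => mul_nonneg (hA j i) (hx i))
    (fun i _ => mul_nonneg (sq_nonneg c) (mul_nonneg (hA j i) (mul_nonneg (hx i) (sq_nonneg _))))
    (fun i _ => hsq i)
  rw [← mul_sum] at this
  simp only [mulVec, dotProduct]
  linarith

/-- The hypothesis `ξ i ^ 2 ≤ ξ i * gradFmu A μ x i` says that `ξ i` has the sign of the
gradient and is at most it in absolute value. -/
lemma fmu_updStep_sub_le {m n : ℕ} {A : Matrix (Fin m) (Fin n) ℝ} (hA : ∀ j i, 0 ≤ A j i)
    {μ α K : ℝ} (hμ : 0 < μ) (hα0 : 0 ≤ α) (hα1 : α ≤ 1) (hK : 0 ≤ K) (hαK : 2 * α * K ≤ μ)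
    {x ξ : Fin n → ℝ} (hx : ∀ i, 0 ≤ x i) (hAx : ∀ j, (A *ᵥ x) j ≤ K)
    (hξ : ∀ i, |ξ i| ≤ 1) (hξg : ∀ i, ξ i ^ 2 ≤ ξ i * gradFmu A μ x i) :
    fmu A μ (updStep α x ξ) - fmu A μ x
      ≤ -(α * (1 - α - 8 * α * K / μ)) * ∑ i, x i * (ξ i * gradFmu A μ x i) := by
  set g := gradFmu A μ x
  set d := updStep α x ξ - x
  set y : Fin n → ℝ := fun i => x i * ξ i ^ 2
  set S := ∑ i, x i * (ξ i * g i)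
  have hd : ∀ i, |d i| ≤ 2 * α * (x i * |ξ i|) := fun i =>
    abs_updStep_sub_apply_le hα0 i (hx i) (by nlinarith [hξ i, abs_nonneg (ξ i)])
  have hAy : ∀ j, 0 ≤ (A *ᵥ y) j ∧ (A *ᵥ y) j ≤ K := fun j => by
    simp only [mulVec, dotProduct] at hAx ⊢
    refine ⟨sum_nonneg fun i _ => ?_, (sum_le_sum fun i _ => ?_).trans (hAx j)⟩
    · exact mul_nonneg (hA j i) (mul_nonneg (hx i) (sq_nonneg _))
    · have : ξ i ^ 2 ≤ 1 := by rw [← sq_abs]; nlinarith [hξ i, abs_nonneg (ξ i)]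
      exact mul_le_mul_of_nonneg_left (mul_le_of_le_one_right (hx i) this) (hA j i)
  have hAd : ∀ j, (A *ᵥ d) j ^ 2 ≤ 4 * α ^ 2 * K * (A *ᵥ y) j := fun j => by
    have := sq_mulVec_le_of_abs_le hA hx hd j
    nlinarith [mul_le_mul_of_nonneg_right (hAx j) (hAy j).1, sq_nonneg α]
  have hAdμ : ∀ j, |(A *ᵥ d) j| ≤ μ := fun j => by
    refine abs_le_of_sq_le_sq ((hAd j).trans ?_) hμ.le
    nlinarith [mul_le_mul_of_nonneg_left (hAy j).2 (by positivity : 0 ≤ 4 * α ^ 2 * K),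
      mul_le_mul_of_nonneg_left hαK (by positivity : 0 ≤ 2 * α * K)]
  have hlin : ∑ i, g i * d i ≤ -(α * (1 - α)) * S := by
    rw [mul_sum]
    refine sum_le_sum fun i _ => ?_
    have := mul_le_mul_of_nonneg_left
      (exp_neg_mul_sub_one_mul_le hα0 hα1 (hξ i) (hξg i)) (hx i)
    have hdi : d i = x i * (Real.exp (-(α * ξ i)) - 1) := updStep_sub_apply i
    rw [hdi]
    linarith
  have hquad : ∑ j, packingWeight A μ x j * (A *ᵥ d) j ^ 2 ≤ 8 * α ^ 2 * K * S := by
    calc ∑ j, packingWeight A μ x j * (A *ᵥ d) j ^ 2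
        ≤ ∑ j, packingWeight A μ x j * (4 * α ^ 2 * K * (A *ᵥ y) j) :=
          sum_le_sum fun j _ => mul_le_mul_of_nonneg_left (hAd j) (Real.exp_pos _).le
      _ = 4 * α ^ 2 * K * ∑ i, (1 + g i) * y i := by
          rw [← packingWeight_dotProduct_mulVec, dotProduct, mul_sum]
          exact sum_congr rfl fun j _ => by ring
      _ ≤ 4 * α ^ 2 * K * ∑ i, 2 * (x i * (ξ i * g i)) := by
          refine mul_le_mul_of_nonneg_left (sum_le_sum fun i _ => ?_) (by positivity)
          have := mul_le_mul_of_nonneg_left (sq_mul_one_add_le_two_mul (hξ i) (hξg i)) (hx i)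
          simp only [y]
          linarith
      _ = 8 * α ^ 2 * K * S := by rw [← mul_sum]; ring
  have hstep := fmu_add_sub_le A hμ x d hAdμ
  rw [add_sub_cancel] at hstep
  calc fmu A μ (updStep α x ξ) - fmu A μ x
      ≤ -(α * (1 - α)) * S + 1 / μ * (8 * α ^ 2 * K * S) := by
        have := mul_le_mul_of_nonneg_left hquad (one_div_pos.mpr hμ).le
        linarith
    _ = -(α * (1 - α - 8 * α * K / μ)) * S := by field_simp; ring

section Truncation

variable {n : ℕ} {ε : ℝ} {g : Fin n → ℝ}

lemma xiTrunc_sq_le_mul (i : Fin n) : xiTrunc ε g i ^ 2 ≤ xiTrunc ε g i * g i := by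
  unfold xiTrunc
  split_ifs with hsmall hbig
  · simp
  · nlinarith
  · exact (sq (g i)).le

lemma abs_xiTrunc_le_one {i : Fin n} (hg : -1 ≤ g i) : |xiTrunc ε g i| ≤ 1 := by
  unfold xiTrunc
  split_ifs with hsmall hbig
  · simp
  · simp
  · exact abs_le.mpr ⟨hg, not_lt.mp hbig⟩

lemma xiBucket_eq_or_eq_zero (ξ : Fin n → ℝ) (t : ℕ) (i : Fin n) :
    xiBucket ε ξ t i = ξ i ∨ xiBucket ε ξ t i = 0 := by
  unfold xiBucket
  split_ifs <;> simp

lemma xiBucket_xiTrunc_sq_le_mul (t : ℕ) (i : Fin n) :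
    xiBucket ε (xiTrunc ε g) t i ^ 2 ≤ xiBucket ε (xiTrunc ε g) t i * g i := by
  rcases xiBucket_eq_or_eq_zero (xiTrunc ε g) t i with h | h <;> rw [h]
  · exact xiTrunc_sq_le_mul i
  · simp

lemma abs_xiBucket_xiTrunc_le_one (t : ℕ) {i : Fin n} (hg : -1 ≤ g i) :
    |xiBucket ε (xiTrunc ε g) t i| ≤ 1 := by
  rcases xiBucket_eq_or_eq_zero (xiTrunc ε g) t i with h | h <;> rw [h]
  · exact abs_xiTrunc_le_one hg
  · simp

lemma one_mem_last_bucket (hε0 : 0 < ε) (hε1 : ε < 1) :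
    1 ∈ Set.Ioc (ε * 2 ^ (wBuckets ε - 1)) (ε * 2 ^ (wBuckets ε - 1 + 1)) := by
  have hinv : 1 < 1 / ε := by rwa [lt_div_iff₀ hε0, one_mul]
  have hL : 0 < Real.logb 2 (1 / ε) := Real.logb_pos one_lt_two hinv
  have hw : 1 ≤ wBuckets ε := Nat.one_le_iff_ne_zero.mpr (Nat.ceil_pos.mpr hL).ne'
  have hlow : ((wBuckets ε - 1 : ℕ) : ℝ) < Real.logb 2 (1 / ε) := by
    rw [Nat.cast_sub hw, Nat.cast_one, sub_lt_iff_lt_add]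
    exact Nat.ceil_lt_add_one hL.le
  have hup : Real.logb 2 (1 / ε) ≤ ((wBuckets ε - 1 + 1 : ℕ) : ℝ) := by
    rw [Nat.sub_add_cancel hw]
    exact Nat.le_ceil _
  rw [Real.lt_logb_iff_rpow_lt one_lt_two (by positivity), Real.rpow_natCast,
    lt_div_iff₀ hε0] at hlow
  rw [Real.logb_le_iff_le_rpow one_lt_two (by positivity), Real.rpow_natCast,
    div_le_iff₀ hε0] at hup
  constructor <;> linarith

lemma xiBucket_xiTrunc_last (hε0 : 0 < ε) (hε1 : ε < 1) {i : Fin n} (hg : 1 < g i) :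
    xiBucket ε (xiTrunc ε g) (wBuckets ε - 1) i = 1 := by
  have htrunc : xiTrunc ε g i = 1 := by
    rw [xiTrunc, if_neg fun h => by linarith [(Set.mem_Icc.mp h).2], if_pos hg]
  rw [xiBucket, htrunc, if_pos (Set.mem_union_left _ (one_mem_last_bucket hε0 hε1))]

/-- `η` is supported where `g > 1`, and there `ξ = 1` falls in the last bucket. -/
lemma sum_etaBucket_mul_sub_le (hε0 : 0 < ε) (hε1 : ε < 1) {x u : Fin n → ℝ}
    (hx : ∀ i, 0 ≤ x i) (hu : ∀ i, 0 ≤ u i) (t : ℕ) :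
    ∑ i, etaBucket (wBuckets ε) (etaTrunc g) t i * (x i - u i)
      ≤ ∑ i, x i * (xiBucket ε (xiTrunc ε g) t i * g i) := by
  have hnonneg : ∀ i, 0 ≤ x i * (xiBucket ε (xiTrunc ε g) t i * g i) := fun i =>
    mul_nonneg (hx i) ((sq_nonneg _).trans (xiBucket_xiTrunc_sq_le_mul t i))
  unfold etaBucket
  split_ifs with ht
  · refine sum_le_sum fun i _ => ?_
    unfold etaTrunc
    split_ifs with hg
    · rw [ht, xiBucket_xiTrunc_last hε0 hε1 hg]
      nlinarith [hx i, hu i]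
    · simpa using hnonneg i
  · simpa using sum_nonneg fun i _ => hnonneg i

end Truncation

lemma smoothing_mem_Ioc {m n : ℕ} (hm : 0 < m) (hn : 0 < n) {ε : ℝ} (hε0 : 0 < ε)
    (hε2 : ε ≤ 1 / 2) : ε / (4 * Real.log (n * m / ε)) ∈ Set.Ioc 0 (1 / 4) := by
  have hnm : 2 ≤ (n : ℝ) * m / ε := by
    rw [le_div_iff₀ hε0]
    nlinarith [(Nat.one_le_cast.mpr hn : (1 : ℝ) ≤ n), (Nat.one_le_cast.mpr hm : (1 : ℝ) ≤ m)]
  have hlog : 2 < 4 * Real.log (n * m / ε) := by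
    linarith [Real.log_le_log two_pos hnm, Real.log_two_gt_d9]
  refine ⟨by positivity, ?_⟩
  rw [div_le_iff₀ (by linarith)]
  linarith

theorem gradient_descent_step_general (m n : ℕ) (hm : 0 < m) (hn : 0 < n)
    (A : Matrix (Fin m) (Fin n) ℝ) (hA : ∀ j i, 0 ≤ A j i)
    (ε : ℝ) (hε : ε ∈ Set.Ioc (0 : ℝ) (1 / 2))
    (μ : ℝ) (hμ : μ = ε / (4 * Real.log ((n : ℝ) * m / ε)))
    (α : ℝ) (hα : α = μ / 20)
    (x : Fin n → ℝ) (hx : ∀ i, 0 ≤ x i) (hfeas : ∀ j, A.mulVec x j ≤ 1 + ε)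
    (t : ℕ)
    (u : Fin n → ℝ) (hu : ∀ i, 0 ≤ u i) :
    (∑ i, α * etaBucket (wBuckets ε) (etaTrunc (gradFmu A μ x)) t i * (x i - u i))
      ≤ 4 * (fmu A μ x
          - fmu A μ (updStep α x (xiBucket ε (xiTrunc ε (gradFmu A μ x)) t))) := by
  obtain ⟨hε0, hε2⟩ := hε
  obtain ⟨hμ0, hμ4⟩ : μ ∈ Set.Ioc 0 (1 / 4) := hμ ▸ smoothing_mem_Ioc hm hn hε0 hε2
  set g := gradFmu A μ x
  set ξ := xiBucket ε (xiTrunc ε g) t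
  set S := ∑ i, x i * (ξ i * g i)
  have hS : 0 ≤ S := sum_nonneg fun i _ =>
    mul_nonneg (hx i) ((sq_nonneg _).trans (xiBucket_xiTrunc_sq_le_mul t i))
  have hdescent := fmu_updStep_sub_le (α := α) (K := 1 + ε) (ξ := ξ) hA hμ0
    (by linarith) (by linarith) (by linarith) (by rw [hα]; nlinarith) hx hfeas
    (fun i => abs_xiBucket_xiTrunc_le_one t (neg_one_le_gradFmu A hA x i))
    (xiBucket_xiTrunc_sq_le_mul t)
  have hrate : α / 4 ≤ α * (1 - α - 8 * α * (1 + ε) / μ) := by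
    rw [hα]
    field_simp
    nlinarith
  calc ∑ i, α * etaBucket (wBuckets ε) (etaTrunc g) t i * (x i - u i)
      = α * ∑ i, etaBucket (wBuckets ε) (etaTrunc g) t i * (x i - u i) := by
        simp only [mul_assoc, mul_sum]
    _ ≤ α * S := mul_le_mul_of_nonneg_left
        (sum_etaBucket_mul_sub_le hε0 (by linarith) hx hu t) (by rw [hα]; positivity)
    _ ≤ 4 * (fmu A μ x - fmu A μ (updStep α x ξ)) := by
        nlinarith [mul_le_mul_of_nonneg_right hrate hS]

/-- with `ε ∈ (0,1/2]`, `μ = ε/(4 log(nm/ε))`, `α = μ/20`, `x ≥ 0` with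
`Ax ≤ (1 + ε)·1`, for every bucket `t < w` and every `u ≥ 0`,
`⟨α η^{(t)}, x − u⟩ ≤ 4(f_μ(x) − f_μ(x′^{(t)}))`. -/
theorem gradient_descent_step (m n : ℕ) (hm : 0 < m) (hn : 0 < n)
    (A : Matrix (Fin m) (Fin n) ℝ) (hA : ∀ j i, 0 ≤ A j i)
    (ε : ℝ) (hε : ε ∈ Set.Ioc (0 : ℝ) (1 / 2))
    (μ : ℝ) (hμ : μ = ε / (4 * Real.log ((n : ℝ) * m / ε)))
    (α : ℝ) (hα : α = μ / 20)
    (x : Fin n → ℝ) (hx : ∀ i, 0 ≤ x i) (hfeas : ∀ j, A.mulVec x j ≤ 1 + ε)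
    (t : ℕ) (ht : t < wBuckets ε)
    (u : Fin n → ℝ) (hu : ∀ i, 0 ≤ u i) :
    (∑ i, α * etaBucket (wBuckets ε) (etaTrunc (gradFmu A μ x)) t i * (x i - u i))
      ≤ 4 * (fmu A μ x
          - fmu A μ (updStep α x (xiBucket ε (xiTrunc ε (gradFmu A μ x)) t))) :=
  gradient_descent_step_general m n hm hn A hA ε hε μ hμ α hα x hx hfeas t u hu
end
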